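/- Let 𝔤 be a finite-dimensional complex Lie algebra, let N, Ñ be 𝔤-modules and E a finite-dimensional 𝔤-module. Assume N is a direct summand of Ñ as a 𝔤-module, and Ñ is a direct summand of N⊗E as a 𝔤-module. Set A := F(N,N). Then the algebra homomorphism F(Ñ,Ñ) → End_A(F(N,Ñ)) given by left composition is bijective, i.e. End_A(F(N,Ñ)) = F(Ñ,Ñ). -/

import Mathlib

/-!
Choose a basis `(e k)` of `E` with coordinate functionals `(e* k)`. The retraction `q ∘ j = id`
gives maps `ψ k : N → Ñ`, `n ↦ q (n ⊗ e k)` and `χ k : Ñ → N`, `m ↦ (id ⊗ e* k) (j m)` with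
`∑ k, ψ k ∘ χ k = id`. They are locally finite, being values of the `𝔤`-equivariant maps
`e ↦ q ∘ (· ⊗ e)` and `φ ↦ (id ⊗ φ) ∘ j` on the finite-dimensional modules `E` and `E*`;
and `F` is closed under composition, by the Leibniz rule for the adjoint action.
Given this dual basis, `b` is determined by the `b ∘ ψ k`, and every
`φ ∈ F(N,Ñ)` equals `∑ k, ψ k ∘ (χ k ∘ φ)` with `χ k ∘ φ ∈ A`, so an `A`-linear `Φ` is left
composition with `∑ k, Φ (ψ k) ∘ χ k`.
-/

open TensorProduct

/-- `f` belongs to the locally finite part `F(M,N)` of `Hom_ℂ(M,N)` under the adjoint action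
`⁅x, f⁆ = x ∘ f - f ∘ x` of `L`: the `L`-submodule generated by `f` is finite-dimensional. -/
def InF (L : Type) [LieRing L] [LieAlgebra ℂ L] {M N : Type}
    [AddCommGroup M] [Module ℂ M] [LieRingModule L M] [LieModule ℂ L M]
    [AddCommGroup N] [Module ℂ N] [LieRingModule L N] [LieModule ℂ L N]
    (f : M →ₗ[ℂ] N) : Prop :=
  ∃ V : LieSubmodule ℂ L (M →ₗ[ℂ] N), f ∈ V ∧ FiniteDimensional ℂ V.toSubmodule

variable (L : Type) [LieRing L] [LieAlgebra ℂ L]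

/-- The locally finite part `F(M,N)` of `Hom_ℂ(M,N)`, as a `ℂ`-subspace. -/
def Fmod (M N : Type)
    [AddCommGroup M] [Module ℂ M] [LieRingModule L M] [LieModule ℂ L M]
    [AddCommGroup N] [Module ℂ N] [LieRingModule L N] [LieModule ℂ L N] :
    Submodule ℂ (M →ₗ[ℂ] N) where
  carrier := {f | InF L f}
  zero_mem' := ⟨⊥, LieSubmodule.zero_mem ⊥, by
    rw [LieSubmodule.bot_toSubmodule]; infer_instance⟩
  add_mem' := by
    rintro f g ⟨V, hfV, hV⟩ ⟨W, hgW, hW⟩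
    refine ⟨V ⊔ W, ?_, ?_⟩
    · exact add_mem ((LieSubmodule.mem_sup _ _ _).2 ⟨f, hfV, 0, W.zero_mem, by simp⟩)
        ((LieSubmodule.mem_sup _ _ _).2 ⟨0, V.zero_mem, g, hgW, by simp⟩)
    · rw [LieSubmodule.sup_toSubmodule]
      exact Submodule.finiteDimensional_sup _ _
  smul_mem' := by
    rintro c f ⟨V, hfV, hV⟩
    exact ⟨V, V.smul_mem c hfV, hV⟩

section LocallyFinite

variable {L} {M N P : Type}
    [AddCommGroup M] [Module ℂ M] [LieRingModule L M] [LieModule ℂ L M]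
    [AddCommGroup N] [Module ℂ N] [LieRingModule L N] [LieModule ℂ L N]
    [AddCommGroup P] [Module ℂ P] [LieRingModule L P] [LieModule ℂ L P]

theorem InF.of_mem {V : Submodule ℂ (M →ₗ[ℂ] N)} (hV : ∀ (x : L), ∀ f ∈ V, ⁅x, f⁆ ∈ V)
    [FiniteDimensional ℂ V] {f : M →ₗ[ℂ] N} (hf : f ∈ V) : InF L f :=
  ⟨⟨V, hV _ _⟩, hf, ‹_›⟩

theorem lie_linearMap_comp (x : L) (g : N →ₗ[ℂ] P) (f : M →ₗ[ℂ] N) :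
    ⁅x, g ∘ₗ f⁆ = ⁅x, g⁆ ∘ₗ f + g ∘ₗ ⁅x, f⁆ := by
  ext m
  simp

theorem InF.comp {g : N →ₗ[ℂ] P} {f : M →ₗ[ℂ] N} (hg : InF L g) (hf : InF L f) :
    InF L (g ∘ₗ f) := by
  obtain ⟨W, hgW, hW⟩ := hg
  obtain ⟨V, hfV, hV⟩ := hf
  let c : (N →ₗ[ℂ] P) →ₗ[ℂ] (M →ₗ[ℂ] N) →ₗ[ℂ] M →ₗ[ℂ] P := LinearMap.llcomp ℂ M N P
  have : FiniteDimensional ℂ (Submodule.map₂ c W V) := by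
    rw [← Submodule.fg_iff_finiteDimensional] at *
    exact hW.map₂ c hV
  refine InF.of_mem (fun x => ?_) (Submodule.apply_mem_map₂ c hgW hfV)
  suffices Submodule.map₂ c W V ≤ (Submodule.map₂ c W V).comap (LieModule.toEnd ℂ L _ x) from
    fun f hf => this hf
  refine Submodule.map₂_le.2 fun g hg f hf => ?_
  simp only [Submodule.mem_comap, LieModule.toEnd_apply_apply]
  rw [show c g f = g ∘ₗ f from rfl, lie_linearMap_comp]
  exact add_mem (Submodule.apply_mem_map₂ c (W.lie_mem hg) hf)
    (Submodule.apply_mem_map₂ c hg (V.lie_mem hf))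

theorem LieModuleHom.inF_apply {E : Type} [AddCommGroup E] [Module ℂ E] [LieRingModule L E]
    [LieModule ℂ L E] [FiniteDimensional ℂ E] (T : E →ₗ⁅ℂ,L⁆ (M →ₗ[ℂ] N)) (e : E) :
    InF L (T e) :=
  ⟨T.range, T.mem_range_self e, by rw [T.toSubmodule_range]; infer_instance⟩

theorem LieModuleHom.inF (f : M →ₗ⁅ℂ,L⁆ N) : InF L (f : M →ₗ[ℂ] N) := by
  have hf : ∀ x : L, ⁅x, (f : M →ₗ[ℂ] N)⁆ = 0 := fun x => by ext; simp
  refine InF.of_mem (V := ℂ ∙ (f : M →ₗ[ℂ] N)) (fun x g hg => ?_)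
    (Submodule.mem_span_singleton_self _)
  obtain ⟨c, rfl⟩ := Submodule.mem_span_singleton.1 hg
  simp [hf]

end LocallyFinite

section Contraction

variable {L} (N E : Type) [AddCommGroup N] [Module ℂ N] [LieRingModule L N] [LieModule ℂ L N]
    [AddCommGroup E] [Module ℂ E] [LieRingModule L E] [LieModule ℂ L E]

def tmulRightLieHom : E →ₗ⁅ℂ,L⁆ (N →ₗ[ℂ] N ⊗[ℂ] E) :=
  { (TensorProduct.mk ℂ N E).flip with
    map_lie' := fun {x e} => by
      ext n
      simp [TensorProduct.LieModule.lie_tmul_right] }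

def dualContractLieHom : Module.Dual ℂ E →ₗ⁅ℂ,L⁆ (N ⊗[ℂ] E →ₗ[ℂ] N) where
  toFun φ := (TensorProduct.rid ℂ N).toLinearMap ∘ₗ φ.lTensor N
  map_add' φ φ' := by ext; simp
  map_smul' c φ := by ext; simp
  map_lie' := by
    intro x φ
    ext n e
    simp [TensorProduct.LieModule.lie_tmul_right]

theorem sum_tmulRightLieHom_comp_dualContractLieHom {ι : Type} [Fintype ι]
    (b : Module.Basis ι ℂ E) :
    ∑ k, (tmulRightLieHom (L := L) N E (b k) : N →ₗ[ℂ] N ⊗[ℂ] E) ∘ₗ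
      dualContractLieHom (L := L) N E (b.coord k) = LinearMap.id := by
  ext n e
  simp [tmulRightLieHom, dualContractLieHom, ← TensorProduct.tmul_smul, ← TensorProduct.tmul_sum]

end Contraction

variable {L} in
theorem exists_sum_comp_eq_id_of_retract {N Ñ E : Type}
    [AddCommGroup N] [Module ℂ N] [LieRingModule L N] [LieModule ℂ L N]
    [AddCommGroup Ñ] [Module ℂ Ñ] [LieRingModule L Ñ] [LieModule ℂ L Ñ]
    [AddCommGroup E] [Module ℂ E] [LieRingModule L E] [LieModule ℂ L E] [FiniteDimensional ℂ E]
    {j : Ñ →ₗ⁅ℂ,L⁆ N ⊗[ℂ] E} {q : N ⊗[ℂ] E →ₗ⁅ℂ,L⁆ Ñ} (hqj : ∀ m, q (j m) = m) :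
    ∃ (d : ℕ) (ψ : Fin d → N →ₗ[ℂ] Ñ) (χ : Fin d → Ñ →ₗ[ℂ] N),
      (∀ k, InF L (ψ k)) ∧ (∀ k, InF L (χ k)) ∧ ∑ k, ψ k ∘ₗ χ k = LinearMap.id := by
  let b := Module.finBasis ℂ E
  refine ⟨_, fun k => (q : N ⊗[ℂ] E →ₗ[ℂ] Ñ) ∘ₗ tmulRightLieHom N E (b k),
    fun k => dualContractLieHom N E (b.coord k) ∘ₗ (j : Ñ →ₗ[ℂ] N ⊗[ℂ] E),
    fun k => q.inF.comp ((tmulRightLieHom N E).inF_apply _),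
    fun k => ((dualContractLieHom N E).inF_apply _).comp j.inF, ?_⟩
  have hb := sum_tmulRightLieHom_comp_dualContractLieHom (L := L) N E b
  ext m
  have := congr(q ($hb (j m)))
  simpa [LinearMap.sum_apply, hqj] using this

section DualBasis

variable {ι N Ñ : Type} [Fintype ι] [AddCommGroup N] [Module ℂ N] [AddCommGroup Ñ] [Module ℂ Ñ]
    {ψ : ι → N →ₗ[ℂ] Ñ} {χ : ι → Ñ →ₗ[ℂ] N}

theorem LinearMap.ext_of_sum_comp_eq_id {P : Type} [AddCommGroup P] [Module ℂ P]
    (hψχ : ∑ k, ψ k ∘ₗ χ k = LinearMap.id) {b b' : Ñ →ₗ[ℂ] P}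
    (h : ∀ k, b ∘ₗ ψ k = b' ∘ₗ ψ k) : b = b' := by
  ext m
  have hm : ∑ k, ψ k (χ k m) = m := by simpa [LinearMap.sum_apply] using congr($hψχ m)
  rw [← hm, map_sum, map_sum]
  exact Finset.sum_congr rfl fun k _ => congr($(h k) (χ k m))

variable [LieRingModule L N] [LieModule ℂ L N] [LieRingModule L Ñ] [LieModule ℂ L Ñ]

theorem exists_inF_comp_eq_of_sum_comp_eq_id (hψ : ∀ k, InF L (ψ k)) (hχ : ∀ k, InF L (χ k))
    (hψχ : ∑ k, ψ k ∘ₗ χ k = LinearMap.id)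
    (A : Subalgebra ℂ (Module.End ℂ N)) (hA : ∀ f : Module.End ℂ N, InF L f → f ∈ A)
    [Module (↥A)ᵐᵒᵖ ↥(Fmod L N Ñ)]
    (hsmul : ∀ (a : ↥A) (φ : ↥(Fmod L N Ñ)),
      ((MulOpposite.op a • φ : ↥(Fmod L N Ñ)) : N →ₗ[ℂ] Ñ) =
        (φ : N →ₗ[ℂ] Ñ) ∘ₗ (a : Module.End ℂ N))
    (Φ : ↥(Fmod L N Ñ) →ₗ[(↥A)ᵐᵒᵖ] ↥(Fmod L N Ñ)) :
    ∃ b : Ñ →ₗ[ℂ] Ñ, InF L b ∧ ∀ φ : ↥(Fmod L N Ñ), (Φ φ : N →ₗ[ℂ] Ñ) = b ∘ₗ (φ : N →ₗ[ℂ] Ñ) := by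
  let e k : Fmod L N Ñ := ⟨ψ k, hψ k⟩
  let a (φ : Fmod L N Ñ) k : A := ⟨χ k ∘ₗ φ, hA _ ((hχ k).comp φ.2)⟩
  have decomp (φ : Fmod L N Ñ) : φ = ∑ k, MulOpposite.op (a φ k) • e k := by
    ext n
    have hn : ∑ k, ψ k (χ k ((φ : N →ₗ[ℂ] Ñ) n)) = (φ : N →ₗ[ℂ] Ñ) n := by
      simpa [LinearMap.sum_apply] using congr($hψχ ((φ : N →ₗ[ℂ] Ñ) n))
    simpa [Submodule.coe_sum, LinearMap.sum_apply, hsmul, e, a] using hn.symm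
  refine ⟨∑ k, (Φ (e k) : N →ₗ[ℂ] Ñ) ∘ₗ χ k,
    (Fmod L Ñ Ñ).sum_mem fun k _ => (Φ (e k)).2.comp (hχ k), fun φ => ?_⟩
  conv_lhs => rw [decomp φ]
  ext n
  simp [LinearMap.sum_apply, hsmul, a]

end DualBasis

theorem statement6 (N Ntilde E : Type)
    [AddCommGroup N] [Module ℂ N] [LieRingModule L N] [LieModule ℂ L N]
    [AddCommGroup Ntilde] [Module ℂ Ntilde] [LieRingModule L Ntilde] [LieModule ℂ L Ntilde]
    [AddCommGroup E] [Module ℂ E] [LieRingModule L E] [LieModule ℂ L E]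
    [FiniteDimensional ℂ E]
    (j : Ntilde →ₗ⁅ℂ,L⁆ (N ⊗[ℂ] E)) (q : (N ⊗[ℂ] E) →ₗ⁅ℂ,L⁆ Ntilde)
    (hqj : ∀ m : Ntilde, q (j m) = m)
    (A : Subalgebra ℂ (Module.End ℂ N)) (hA : ∀ f : Module.End ℂ N, f ∈ A ↔ InF L f)
    [Module (↥A)ᵐᵒᵖ ↥(Fmod L N Ntilde)]
    (hsmul : ∀ (a : ↥A) (ψ : ↥(Fmod L N Ntilde)),
      ((MulOpposite.op a • ψ : ↥(Fmod L N Ntilde)) : N →ₗ[ℂ] Ntilde) =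
        (ψ : N →ₗ[ℂ] Ntilde) ∘ₗ (a : Module.End ℂ N)) :
    (∀ b : Ntilde →ₗ[ℂ] Ntilde, InF L b →
      ∀ ψ : ↥(Fmod L N Ntilde), InF L (b ∘ₗ (ψ : N →ₗ[ℂ] Ntilde))) ∧
    (∀ b b' : Ntilde →ₗ[ℂ] Ntilde, InF L b → InF L b' →
      (∀ ψ : ↥(Fmod L N Ntilde),
        b ∘ₗ (ψ : N →ₗ[ℂ] Ntilde) = b' ∘ₗ (ψ : N →ₗ[ℂ] Ntilde)) → b = b') ∧
    (∀ Φ : ↥(Fmod L N Ntilde) →ₗ[(↥A)ᵐᵒᵖ] ↥(Fmod L N Ntilde),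
      ∃ b : Ntilde →ₗ[ℂ] Ntilde, InF L b ∧
        ∀ ψ : ↥(Fmod L N Ntilde),
          ((Φ ψ : ↥(Fmod L N Ntilde)) : N →ₗ[ℂ] Ntilde) =
            b ∘ₗ (ψ : N →ₗ[ℂ] Ntilde)) := by
  obtain ⟨d, ψ, χ, hψ, hχ, hψχ⟩ := exists_sum_comp_eq_id_of_retract hqj
  exact ⟨fun b hb φ => hb.comp φ.2,
    fun b b' _ _ h => LinearMap.ext_of_sum_comp_eq_id hψχ fun k => h ⟨ψ k, hψ k⟩,
    exists_inF_comp_eq_of_sum_comp_eq_id L hψ hχ hψχ A (fun f => (hA f).2) hsmul⟩
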